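/- arXiv:math/0509694 — 3 statements merged into one kernel-verified Lean document; each statement's English description precedes it below -/
import Mathlib

section
/- Let c : ℝ → ℂ be a smooth 2π-periodic immersion of rotation degree 0, and let e(θ) = c'(θ)/|c'(θ)| be its unit tangent. Then the image e([0,2π]) ⊆ S¹ is not contained in any closed arc of length π; equivalently, the length of the arc Im(e) is strictly greater than π. -/
open Real

/-- For a smooth `2π`-periodic immersion `c` of rotation degree `0` (expressed by the
existence of a continuous `2π`-periodic argument), the image of the unit tangent
`e = c'/|c'|` is not contained in any closed arc of length `π`. -/
theorem stmt4 (c : ℝ → ℂ) (hsmooth : ContDiff ℝ (⊤ : ℕ∞) c)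
    (hper : ∀ θ : ℝ, c (θ + 2 * π) = c θ)
    (himm : ∀ θ : ℝ, deriv c θ ≠ 0)
    (a : ℝ → ℝ) (ha : Continuous a) (haper : ∀ θ : ℝ, a (θ + 2 * π) = a θ)
    (harg : ∀ θ : ℝ, deriv c θ / (‖deriv c θ‖ : ℂ) =
      Complex.exp (Complex.I * (a θ : ℂ))) :
    ¬ ∃ r : ℝ, ∀ θ ∈ Set.Icc (0 : ℝ) (2 * π),
      ∃ s ∈ Set.Icc (r - π / 2) (r + π / 2),
        deriv c θ / (‖deriv c θ‖ : ℂ) = Complex.exp (Complex.I * (s : ℂ)) := by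
  rintro ⟨r, hr⟩
  have h2pi : (0 : ℝ) < 2 * π := Real.two_pi_pos
  have hdc : Continuous (deriv c) := hsmooth.continuous_deriv (by simp)
  -- the integral of the derivative over a period vanishes
  have hderint : ∫ θ in (0:ℝ)..(2*π), deriv c θ = 0 := by
    rw [intervalIntegral.integral_deriv_eq_sub
      (fun x _ => (hsmooth.differentiable (by simp)).differentiableAt)
      (hdc.continuousOn.intervalIntegrable)]
    have : c (2 * π) = c 0 := by simpa using hper 0
    simp [this]
  set F : ℝ → ℂ := fun θ => deriv c θ * Complex.exp (-(Complex.I * (r : ℂ))) with hF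
  have hFcont : Continuous F := by
    exact hdc.mul continuous_const
  have hFint : ∫ θ in (0:ℝ)..(2*π), F θ = 0 := by
    rw [hF, intervalIntegral.integral_mul_const, hderint, zero_mul]
  have hFne : ∀ θ, F θ ≠ 0 := fun θ =>
    mul_ne_zero (himm θ) (Complex.exp_ne_zero _)
  -- the real part of F is nonnegative on [0, 2π]
  have hre : ∀ θ ∈ Set.Icc (0:ℝ) (2*π), 0 ≤ (F θ).re := by
    intro θ hθ
    obtain ⟨s, hs, he⟩ := hr θ hθ
    have habs : (‖deriv c θ‖ : ℂ) ≠ 0 := by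
      exact Complex.ofReal_ne_zero.mpr (norm_ne_zero_iff.mpr (himm θ))
    have hd : deriv c θ = Complex.exp (Complex.I * (s : ℂ)) * (‖deriv c θ‖ : ℂ) :=
      (div_eq_iff habs).mp he
    have hexp : Complex.exp (((s - r : ℝ) : ℂ) * Complex.I) =
        Complex.exp (Complex.I * (s : ℂ)) * Complex.exp (-(Complex.I * (r : ℂ))) := by
      rw [← Complex.exp_add]
      congr 1
      push_cast
      ring
    have : F θ = (‖deriv c θ‖ : ℂ) * Complex.exp (((s - r : ℝ) : ℂ) * Complex.I) := by
      show deriv c θ * Complex.exp (-(Complex.I * (r : ℂ))) = _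
      rw [hexp]
      nth_rewrite 1 [hd]
      ring
    rw [this, Complex.re_ofReal_mul, Complex.exp_ofReal_mul_I_re]
    apply mul_nonneg (norm_nonneg _)
    apply Real.cos_nonneg_of_mem_Icc
    constructor <;> [linarith [hs.1]; linarith [hs.2]]
  -- so the real part vanishes identically on (0, 2π]
  have hreint : ∫ θ in (0:ℝ)..(2*π), (F θ).re = 0 := by
    rw [intervalIntegral.integral_of_le h2pi.le] at hFint ⊢
    have h := integral_re (𝕜 := ℂ) (f := F)
      (μ := MeasureTheory.volume.restrict (Set.Ioc (0:ℝ) (2*π))) (hFcont.integrableOn_Ioc)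
    simp only [RCLike.re_to_complex] at h
    rw [h, hFint, Complex.zero_re]
  have hre0 : Set.EqOn (fun θ => (F θ).re) 0 (Set.Ioc (0:ℝ) (2*π)) := by
    have hae : (fun θ => (F θ).re) =ᵐ[MeasureTheory.volume.restrict (Set.Ioc (0:ℝ) (2*π))] 0 := by
      refine (intervalIntegral.integral_eq_zero_iff_of_le_of_nonneg_ae h2pi.le
        ?_ ((Complex.continuous_re.comp hFcont).continuousOn.intervalIntegrable)).mp hreint
      refine MeasureTheory.ae_restrict_of_forall_mem measurableSet_Ioc ?_
      intro θ hθ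
      exact hre θ ⟨hθ.1.le, hθ.2⟩
    exact MeasureTheory.Measure.eqOn_Ioc_of_ae_eq MeasureTheory.volume hae
      (Complex.continuous_re.comp hFcont).continuousOn continuousOn_const
  -- hence the imaginary part never vanishes on (0, 2π]
  set g : ℝ → ℝ := fun θ => (F θ).im with hg
  have hgcont : Continuous g := Complex.continuous_im.comp hFcont
  have hgne : ∀ θ ∈ Set.Ioc (0:ℝ) (2*π), g θ ≠ 0 := by
    intro θ hθ h0
    apply hFne θ
    have hre' := hre0 hθ
    exact Complex.ext (by simpa using hre') h0
  have hgint : ∫ θ in (0:ℝ)..(2*π), g θ = 0 := by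
    rw [intervalIntegral.integral_of_le h2pi.le] at hFint ⊢
    rw [hg]
    have h := integral_im (𝕜 := ℂ) (f := F)
      (μ := MeasureTheory.volume.restrict (Set.Ioc (0:ℝ) (2*π))) (hFcont.integrableOn_Ioc)
    simp only [RCLike.im_to_complex] at h
    rw [h, hFint, Complex.zero_im]
  -- sign constancy via IVT
  have hpi_mem : π ∈ Set.Ioc (0:ℝ) (2*π) := ⟨Real.pi_pos, by linarith [Real.pi_pos]⟩
  have hOC : Set.OrdConnected (Set.Ioc (0:ℝ) (2*π)) := Set.ordConnected_Ioc
  have hsign : ∀ θ ∈ Set.Ioc (0:ℝ) (2*π), (0 < g π → 0 < g θ) ∧ (g π < 0 → g θ < 0) := by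
    intro θ hθ
    have hsub : Set.uIcc θ π ⊆ Set.Ioc (0:ℝ) (2*π) := hOC.uIcc_subset hθ hpi_mem
    have hIVT := intermediate_value_uIcc (hgcont.continuousOn (s := Set.uIcc θ π))
    constructor
    · intro hpos
      by_contra h
      push_neg at h
      have hθneg : g θ < 0 := lt_of_le_of_ne h (hgne θ hθ)
      have : (0:ℝ) ∈ Set.uIcc (g θ) (g π) := Set.mem_uIcc.mpr (Or.inl ⟨hθneg.le, hpos.le⟩)
      obtain ⟨x, hx, hx0⟩ := hIVT this
      exact hgne x (hsub hx) hx0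
    · intro hneg
      by_contra h
      push_neg at h
      have hθpos : 0 < g θ := lt_of_le_of_ne h (Ne.symm (hgne θ hθ))
      have : (0:ℝ) ∈ Set.uIcc (g θ) (g π) := Set.mem_uIcc.mpr (Or.inr ⟨hneg.le, hθpos.le⟩)
      obtain ⟨x, hx, hx0⟩ := hIVT this
      exact hgne x (hsub hx) hx0
  rcases lt_or_gt_of_ne (hgne π hpi_mem) with hneg | hpos
  · -- g < 0 on Ioo, so integral is negative
    have : (0:ℝ) < ∫ θ in (0:ℝ)..(2*π), -g θ := by
      apply intervalIntegral.intervalIntegral_pos_of_pos_on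
      · exact ((hgcont.neg).continuousOn.intervalIntegrable)
      · intro x hx
        have := (hsign x ⟨hx.1, hx.2.le⟩).2 hneg
        linarith
      · exact h2pi
    rw [intervalIntegral.integral_neg, hgint] at this
    simp at this
  · have : (0:ℝ) < ∫ θ in (0:ℝ)..(2*π), g θ := by
      apply intervalIntegral.intervalIntegral_pos_of_pos_on
      · exact (hgcont.continuousOn.intervalIntegrable)
      · intro x hx
        exact (hsign x ⟨hx.1, hx.2.le⟩).1 hpos
      · exact h2pi
    rw [hgint] at this
    exact lt_irrefl _ this
end

section
/- Let e : S¹ → ℂ be a continuous map with |e(θ)| = 1 for all θ, and suppose there exist θ₁, θ₂, θ₃ such that 0 lies in the interior of the convex hull of {e(θ₁), e(θ₂), e(θ₃)}. Then there exists a continuous strictly positive function v : S¹ → ℝ with ∫₀^{2π} v(θ)·e(θ) dθ = 0. -/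
open Real intervalIntegral MeasureTheory

noncomputable def bmp (r c θ : ℝ) : ℝ := max 0 (Real.cos (θ - c) - Real.cos r)

lemma bmp_cont (r c : ℝ) : Continuous (bmp r c) := by
  unfold bmp; fun_prop

lemma bmp_nonneg (r c θ : ℝ) : 0 ≤ bmp r c θ := le_max_left _ _

lemma bmp_per (r c : ℝ) : Function.Periodic (bmp r c) (2 * π) := by
  intro θ; unfold bmp
  rw [show θ + 2 * π - c = (θ - c) + 2 * π by ring, Real.cos_add_two_pi]

lemma bmp_eq_zero {r c θ : ℝ} (hr : 0 < r) (hθ : |θ - c| ≤ π) (h : r ≤ |θ - c|) :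
    bmp r c θ = 0 := by
  have h1 : Real.cos (θ - c) ≤ Real.cos r := by
    rw [← Real.cos_abs (θ - c)]
    exact Real.cos_le_cos_of_nonneg_of_le_pi hr.le hθ h
  unfold bmp
  simp [max_eq_left, sub_nonpos.mpr h1]

lemma bmp_pos {r c θ : ℝ} (hrπ : r ≤ π) (h : |θ - c| < r) : 0 < bmp r c θ := by
  have h1 : Real.cos r < Real.cos (θ - c) := by
    rw [← Real.cos_abs (θ - c)]
    exact Real.cos_lt_cos_of_nonneg_of_le_pi (abs_nonneg _) hrπ h
  unfold bmp
  simp only [bmp, lt_max_iff]; right; linarith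

noncomputable def mass (r : ℝ) : ℝ := ∫ θ in (0:ℝ)..(2*π), bmp r 0 θ

lemma integral_shift {f : ℝ → ℂ} (hf : Function.Periodic f (2*π)) (c : ℝ) :
    ∫ θ in (0:ℝ)..(2*π), f θ = ∫ θ in (c-π)..(c+π), f θ := by
  have := hf.intervalIntegral_add_eq 0 (c - π)
  rw [zero_add] at this
  rw [this]; congr 1; ring

lemma integral_shiftR {f : ℝ → ℝ} (hf : Function.Periodic f (2*π)) (c : ℝ) :
    ∫ θ in (0:ℝ)..(2*π), f θ = ∫ θ in (c-π)..(c+π), f θ := by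
  have := hf.intervalIntegral_add_eq 0 (c - π)
  rw [zero_add] at this
  rw [this]; congr 1; ring

lemma mass_center (r c : ℝ) : ∫ θ in (0:ℝ)..(2*π), bmp r c θ = mass r := by
  have h : ∀ θ, bmp r c θ = bmp r 0 (θ - c) := by intro θ; unfold bmp; rw [sub_zero]
  simp_rw [h]
  rw [intervalIntegral.integral_comp_sub_right (fun θ => bmp r 0 θ) c]
  have := (bmp_per r 0).intervalIntegral_add_eq (0 - c) 0
  rw [zero_add] at this
  rw [show (2:ℝ)*π - c = 0 - c + 2*π by ring, this]
  rfl

lemma mass_pos {r : ℝ} (hr : 0 < r) (hrπ : r ≤ π/2) : 0 < mass r := by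
  have hrπ' : r ≤ π := hrπ.trans (by linarith [Real.pi_pos])
  have hπ : 0 < π := Real.pi_pos
  have hint : ∀ a b : ℝ, IntervalIntegrable (bmp r 0) volume a b :=
    fun a b => (bmp_cont r 0).intervalIntegrable a b
  have h1 : mass r = ∫ θ in (-π)..π, bmp r 0 θ := by
    unfold mass
    rw [integral_shiftR (bmp_per r 0) 0]; norm_num
  rw [h1, ← intervalIntegral.integral_add_adjacent_intervals (a := -π) (b := -r) (c := π)
    (hint _ _) (hint _ _),
    ← intervalIntegral.integral_add_adjacent_intervals (a := -r) (b := r) (c := π)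
    (hint _ _) (hint _ _)]
  have h2 : 0 ≤ ∫ θ in (-π)..(-r), bmp r 0 θ :=
    intervalIntegral.integral_nonneg (by linarith) (fun θ _ => bmp_nonneg r 0 θ)
  have h3 : 0 ≤ ∫ θ in r..π, bmp r 0 θ :=
    intervalIntegral.integral_nonneg (by linarith) (fun θ _ => bmp_nonneg r 0 θ)
  have h4 : 0 < ∫ θ in (-r)..r, bmp r 0 θ := by
    apply intervalIntegral.intervalIntegral_pos_of_pos_on (hint _ _)
    · intro θ hθ
      apply bmp_pos hrπ'
      rw [sub_zero, abs_lt]; exact hθ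
    · linarith
  linarith

lemma bump_close {e : ℝ → ℂ} (he : Continuous e) (hper : Function.Periodic e (2*π)) (c : ℝ)
    {ε : ℝ} (hε : 0 < ε) :
    ∃ δ > 0, δ ≤ π/2 ∧ ∀ r, 0 < r → r < δ →
      ‖(∫ θ in (0:ℝ)..(2*π), bmp r c θ • e θ) - (mass r) • e c‖ ≤ ε * mass r := by
  obtain ⟨δ₀, hδ₀, hcont⟩ := Metric.continuousAt_iff.mp he.continuousAt ε hε
  have hπ : 0 < π := Real.pi_pos
  refine ⟨min δ₀ (π/2), lt_min hδ₀ (by linarith), min_le_right _ _, fun r hr hrδ => ?_⟩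
  have hrπ : r < π/2 := lt_of_lt_of_le hrδ (min_le_right _ _)
  have hrδ₀ : r < δ₀ := lt_of_lt_of_le hrδ (min_le_left _ _)
  have hfper : Function.Periodic (fun θ => bmp r c θ • e θ) (2*π) := by
    intro θ; simp only [bmp_per r c θ, hper θ]
  have h1 : (∫ θ in (0:ℝ)..(2*π), bmp r c θ • e θ) = ∫ θ in (c-π)..(c+π), bmp r c θ • e θ :=
    integral_shift hfper c
  have h2 : mass r = ∫ θ in (c-π)..(c+π), bmp r c θ := by
    rw [← mass_center r c]; exact integral_shiftR (bmp_per r c) c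
  have hbint : IntervalIntegrable (bmp r c) volume (c-π) (c+π) :=
    (bmp_cont r c).intervalIntegrable _ _
  have heint : IntervalIntegrable (fun θ => bmp r c θ • e θ) volume (c-π) (c+π) :=
    ((bmp_cont r c).smul he).intervalIntegrable _ _
  have hecint : IntervalIntegrable (fun θ => bmp r c θ • e c) volume (c-π) (c+π) :=
    ((bmp_cont r c).smul continuous_const).intervalIntegrable _ _
  rw [h1, h2, ← intervalIntegral.integral_smul_const, ← intervalIntegral.integral_sub heint hecint]
  have key : ∀ θ ∈ Set.uIoc (c-π) (c+π),
      ‖bmp r c θ • e θ - bmp r c θ • e c‖ ≤ ε * bmp r c θ := by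
    intro θ hθ
    rw [Set.uIoc_of_le (by linarith)] at hθ
    have habs : |θ - c| ≤ π := by
      rw [abs_le]; constructor <;> [linarith [hθ.1]; linarith [hθ.2]]
    rcases le_or_gt r |θ - c| with h | h
    · rw [bmp_eq_zero hr habs h]; simp
    · rw [← smul_sub, norm_smul, Real.norm_eq_abs,
        abs_of_nonneg (bmp_nonneg r c θ), mul_comm]
      apply mul_le_mul_of_nonneg_right _ (bmp_nonneg r c θ)
      have : dist θ c < δ₀ := by
        rw [Real.dist_eq]; exact h.trans hrδ₀
      rw [← dist_eq_norm]; exact (le_of_lt (hcont this))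
  calc ‖∫ θ in (c-π)..(c+π), (bmp r c θ • e θ - bmp r c θ • e c)‖
      ≤ |∫ θ in (c-π)..(c+π), ε * bmp r c θ| := by
        apply intervalIntegral.norm_integral_le_abs_of_norm_le
        · exact MeasureTheory.ae_restrict_of_forall_mem measurableSet_uIoc key
        · exact (continuous_const.mul (bmp_cont r c)).intervalIntegrable _ _
    _ = ε * ∫ θ in (c-π)..(c+π), bmp r c θ := by
        rw [intervalIntegral.integral_const_mul, abs_of_nonneg]
        rw [← h2]; exact mul_nonneg hε.le (mass_pos hr hrπ.le).le

lemma Q_tendsto {e : ℝ → ℂ} (he : Continuous e) (hper : Function.Periodic e (2*π)) (c : ℝ) :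
    Filter.Tendsto (fun r => (mass r)⁻¹ • ∫ θ in (0:ℝ)..(2*π), bmp r c θ • e θ)
      (nhdsWithin 0 (Set.Ioi 0)) (nhds (e c)) := by
  rw [Metric.tendsto_nhdsWithin_nhds]
  intro ε hε
  obtain ⟨δ, hδ, hδπ, hb⟩ := bump_close he hper c (half_pos hε)
  refine ⟨δ, hδ, fun r hr hdist => ?_⟩
  have hr0 : 0 < r := hr
  have hrδ : r < δ := by
    rw [Real.dist_eq, sub_zero, abs_of_pos hr0] at hdist; exact hdist
  have hm : 0 < mass r := mass_pos hr0 (le_of_lt (lt_of_lt_of_le hrδ hδπ))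
  have key := hb r hr0 hrδ
  rw [dist_eq_norm]
  have : (mass r)⁻¹ • (∫ θ in (0:ℝ)..(2*π), bmp r c θ • e θ) - e c
      = (mass r)⁻¹ • ((∫ θ in (0:ℝ)..(2*π), bmp r c θ • e θ) - mass r • e c) := by
    rw [smul_sub, smul_smul, inv_mul_cancel₀ hm.ne', one_smul]
  rw [this, norm_smul, Real.norm_eq_abs, abs_of_pos (inv_pos.mpr hm)]
  calc (mass r)⁻¹ * ‖(∫ θ in (0:ℝ)..(2*π), bmp r c θ • e θ) - mass r • e c‖
      ≤ (mass r)⁻¹ * (ε/2 * mass r) := by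
        apply mul_le_mul_of_nonneg_left key (inv_pos.mpr hm).le
    _ = ε/2 := by field_simp
    _ < ε := by linarith

noncomputable def ddet (z w : ℂ) : ℝ := z.re * w.im - z.im * w.re

lemma ddet_tendsto {f g : ℝ → ℂ} {l : Filter ℝ} {a b : ℂ}
    (hf : Filter.Tendsto f l (nhds a)) (hg : Filter.Tendsto g l (nhds b)) :
    Filter.Tendsto (fun r => ddet (f r) (g r)) l (nhds (ddet a b)) := by
  unfold ddet
  exact (((Complex.continuous_re.tendsto a).comp hf).mul
    ((Complex.continuous_im.tendsto b).comp hg)).sub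
    (((Complex.continuous_im.tendsto a).comp hf).mul
    ((Complex.continuous_re.tendsto b).comp hg))

lemma mem_hull3 {A B C p : ℂ} (hp : p ∈ convexHull ℝ ({A, B, C} : Set ℂ)) :
    ∃ a b c : ℝ, 0 ≤ a ∧ 0 ≤ b ∧ 0 ≤ c ∧ a + b + c = 1 ∧ a • A + b • B + c • C = p := by
  rw [show ({A, B, C} : Set ℂ) = insert A {B, C} from rfl,
    convexHull_insert ⟨B, by simp⟩, mem_convexJoin] at hp
  obtain ⟨x, hx, z, hz, hseg⟩ := hp
  rw [Set.mem_singleton_iff] at hx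
  subst hx
  rw [convexHull_pair] at hz
  obtain ⟨s, t, hs, ht, hst, rfl⟩ := hz
  obtain ⟨u, v, hu, hv, huv, rfl⟩ := hseg
  exact ⟨u, v * s, v * t, hu, mul_nonneg hv hs, mul_nonneg hv ht, by nlinarith,
    by rw [smul_add, smul_smul, smul_smul]; ring_nf⟩

lemma pos_coeffs {A B C : ℂ} (hA : ‖A‖ = 1) (hB : ‖B‖ = 1)
    (hC : ‖C‖ = 1)
    (hint : (0:ℂ) ∈ interior (convexHull ℝ ({A,B,C} : Set ℂ))) :
    ∃ l1 l2 l3 : ℝ, 0 < l1 ∧ 0 < l2 ∧ 0 < l3 ∧ l1 • A + l2 • B + l3 • C = 0 := by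
  rw [mem_interior_iff_mem_nhds, Metric.mem_nhds_iff] at hint
  obtain ⟨ρ, hρ, hball⟩ := hint
  have hmem : ∀ z : ℂ, ‖z‖ = 1 → -(ρ/2) • z ∈ convexHull ℝ ({A,B,C} : Set ℂ) := by
    intro z hz
    apply hball
    rw [Metric.mem_ball, dist_zero_right, norm_smul, Real.norm_eq_abs,
      hz, mul_one, abs_neg, abs_of_pos (by linarith)]
    linarith
  obtain ⟨a1, b1, c1, ha1, hb1, hc1, _, h1⟩ := mem_hull3 (hmem A hA)
  obtain ⟨a2, b2, c2, ha2, hb2, hc2, _, h2⟩ := mem_hull3 (hmem B hB)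
  obtain ⟨a3, b3, c3, ha3, hb3, hc3, _, h3⟩ := mem_hull3 (hmem C hC)
  refine ⟨a1 + ρ/2 + a2 + a3, b1 + b2 + ρ/2 + b3, c1 + c2 + c3 + ρ/2,
    by linarith, by linarith, by linarith, ?_⟩
  simp only [Complex.real_smul] at h1 h2 h3 ⊢
  push_cast at h1 h2 h3 ⊢
  linear_combination h1 + h2 + h3

lemma det_ne {A B C : ℂ} (hA : ‖A‖ = 1) {l1 l2 l3 : ℝ} (hl3 : 0 < l3)
    (heq : l1 • A + l2 • B + l3 • C = 0)
    (hint : (0:ℂ) ∈ interior (convexHull ℝ ({A,B,C} : Set ℂ))) : ddet A B ≠ 0 := by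
  intro hd
  unfold ddet at hd
  have hA1 : A.re^2 + A.im^2 = 1 := by
    have := Complex.sq_norm A
    rw [hA] at this
    simp only [Complex.normSq_apply] at this
    nlinarith
  have hBA : B = (A.re*B.re + A.im*B.im) • A := by
    rw [Complex.real_smul]
    apply Complex.ext
    · rw [Complex.mul_re, Complex.ofReal_re, Complex.ofReal_im]
      linear_combination (-B.re) * hA1 + (-A.im) * hd
    · rw [Complex.mul_im, Complex.ofReal_re, Complex.ofReal_im]
      linear_combination (-B.im) * hA1 + A.re * hd
  have hCA : C = ((-l1 - l2*(A.re*B.re + A.im*B.im))/l3) • A := by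
    rw [hBA] at heq
    simp only [Complex.real_smul, smul_smul] at heq ⊢
    have hl3' : (l3:ℂ) ≠ 0 := by exact_mod_cast hl3.ne'
    push_cast at heq ⊢
    rw [div_mul_eq_mul_div, eq_div_iff hl3']
    linear_combination heq
  set S : Submodule ℝ ℂ := Submodule.span ℝ {A} with hS
  have hAS : A ∈ S := Submodule.mem_span_singleton_self A
  have hBS : B ∈ S := by rw [hBA]; exact S.smul_mem _ hAS
  have hCS : C ∈ S := by rw [hCA]; exact S.smul_mem _ hAS
  have hsub : convexHull ℝ ({A,B,C} : Set ℂ) ⊆ (S : Set ℂ) := by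
    apply convexHull_min _ S.convex
    intro z hz
    rcases hz with rfl | rfl | rfl
    exacts [hAS, hBS, hCS]
  have htop : S = ⊤ :=
    S.eq_top_of_nonempty_interior' ⟨0, interior_mono hsub hint⟩
  have hAne : A ≠ 0 := by
    intro h; rw [h] at hA; simp at hA
  have h1 : Module.finrank ℝ S = 1 := finrank_span_singleton hAne
  rw [htop, finrank_top, Complex.finrank_real_complex] at h1
  exact absurd h1 (by norm_num)

lemma cramer {q1 q2 x : ℂ} (h : ddet q1 q2 ≠ 0) :
    (ddet x q2 / ddet q1 q2) • q1 + (ddet q1 x / ddet q1 q2) • q2 = x := by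
  apply Complex.ext <;>
  · simp only [Complex.add_re, Complex.add_im, Complex.smul_re, Complex.smul_im, smul_eq_mul]
    field_simp
    unfold ddet
    ring

lemma ddet_combo (l1 l2 : ℝ) (A B : ℂ) : ddet (l1 • A + l2 • B) B = l1 * ddet A B := by
  simp only [ddet, Complex.add_re, Complex.add_im, Complex.smul_re, Complex.smul_im,
    smul_eq_mul]
  ring

lemma ddet_combo' (l1 l2 : ℝ) (A B : ℂ) : ddet A (l1 • A + l2 • B) = l2 * ddet A B := by
  simp only [ddet, Complex.add_re, Complex.add_im, Complex.smul_re, Complex.smul_im,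
    smul_eq_mul]
  ring

/-- If `e : S¹ → S¹ ⊂ ℂ` (modelled as a continuous `2π`-periodic unit-circle-valued map)
has three points whose convex hull contains `0` in its interior, then there is a
continuous strictly positive (`2π`-periodic) weight `v` with `∫₀^{2π} v·e dθ = 0`. -/
theorem stmt5 (e : ℝ → ℂ) (he : Continuous e)
    (hper : ∀ θ : ℝ, e (θ + 2 * π) = e θ)
    (hnorm : ∀ θ : ℝ, ‖e θ‖ = 1)
    (θ₁ θ₂ θ₃ : ℝ)
    (hint : (0 : ℂ) ∈ interior (convexHull ℝ {e θ₁, e θ₂, e θ₃})) :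
    ∃ v : ℝ → ℝ, Continuous v ∧ (∀ θ : ℝ, 0 < v θ) ∧ (∀ θ : ℝ, v (θ + 2 * π) = v θ) ∧
      (∫ θ in (0 : ℝ)..(2 * π), (v θ : ℂ) * e θ) = 0 := by
  have hπ : 0 < π := Real.pi_pos
  have hperiodic : Function.Periodic e (2*π) := hper
  obtain ⟨l1, l2, l3, hl1, hl2, hl3, heq⟩ :=
    pos_coeffs (hnorm θ₁) (hnorm θ₂) (hnorm θ₃) hint
  have hD : ddet (e θ₁) (e θ₂) ≠ 0 := det_ne (hnorm θ₁) hl3 heq hint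
  set I : ℂ := ∫ θ in (0:ℝ)..(2*π), e θ with hI
  set Q : ℝ → ℝ → ℂ :=
    fun c r => (mass r)⁻¹ • ∫ θ in (0:ℝ)..(2*π), bmp r c θ • e θ with hQ
  have hQ1 : Filter.Tendsto (Q θ₁) (nhdsWithin 0 (Set.Ioi 0)) (nhds (e θ₁)) :=
    Q_tendsto he hperiodic θ₁
  have hQ2 : Filter.Tendsto (Q θ₂) (nhdsWithin 0 (Set.Ioi 0)) (nhds (e θ₂)) :=
    Q_tendsto he hperiodic θ₂
  have hQ3 : Filter.Tendsto (Q θ₃) (nhdsWithin 0 (Set.Ioi 0)) (nhds (e θ₃)) :=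
    Q_tendsto he hperiodic θ₃
  set x : ℝ → ℂ := fun r => -(l3 • Q θ₃ r) - r • I with hxdef
  have hlim : -(l3 • e θ₃) - (0:ℝ) • I = l1 • e θ₁ + l2 • e θ₂ := by
    rw [zero_smul, sub_zero, eq_comm]
    exact eq_neg_of_add_eq_zero_left heq
  have hx : Filter.Tendsto x (nhdsWithin 0 (Set.Ioi 0))
      (nhds (l1 • e θ₁ + l2 • e θ₂)) := by
    rw [← hlim]
    exact ((hQ3.const_smul l3).neg).sub
      ((Filter.tendsto_id.mono_right nhdsWithin_le_nhds).smul_const I)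
  have hN1 : Filter.Tendsto (fun r => ddet (x r) (Q θ₂ r) * ddet (Q θ₁ r) (Q θ₂ r))
      (nhdsWithin 0 (Set.Ioi 0))
      (nhds ((l1 * ddet (e θ₁) (e θ₂)) * ddet (e θ₁) (e θ₂))) := by
    have := (ddet_tendsto hx hQ2).mul (ddet_tendsto hQ1 hQ2)
    rwa [ddet_combo] at this
  have hN2 : Filter.Tendsto (fun r => ddet (Q θ₁ r) (x r) * ddet (Q θ₁ r) (Q θ₂ r))
      (nhdsWithin 0 (Set.Ioi 0))
      (nhds ((l2 * ddet (e θ₁) (e θ₂)) * ddet (e θ₁) (e θ₂))) := by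
    have := (ddet_tendsto hQ1 hx).mul (ddet_tendsto hQ1 hQ2)
    rwa [ddet_combo'] at this
  have hDq : Filter.Tendsto (fun r => ddet (Q θ₁ r) (Q θ₂ r)) (nhdsWithin 0 (Set.Ioi 0))
      (nhds (ddet (e θ₁) (e θ₂))) := ddet_tendsto hQ1 hQ2
  have hDD : 0 < ddet (e θ₁) (e θ₂) * ddet (e θ₁) (e θ₂) := mul_self_pos.mpr hD
  have hposN1 : (0:ℝ) < l1 * ddet (e θ₁) (e θ₂) * ddet (e θ₁) (e θ₂) := by
    rw [mul_assoc]; exact mul_pos hl1 hDD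
  have hposN2 : (0:ℝ) < l2 * ddet (e θ₁) (e θ₂) * ddet (e θ₁) (e θ₂) := by
    rw [mul_assoc]; exact mul_pos hl2 hDD
  have hev : ∀ᶠ r in nhdsWithin 0 (Set.Ioi 0),
      (0 < ddet (x r) (Q θ₂ r) * ddet (Q θ₁ r) (Q θ₂ r) ∧
       0 < ddet (Q θ₁ r) (x r) * ddet (Q θ₁ r) (Q θ₂ r)) ∧
      (ddet (Q θ₁ r) (Q θ₂ r) ≠ 0 ∧ r ∈ Set.Ioo 0 (π/2)) := by
    refine (((hN1.eventually (eventually_gt_nhds hposN1)).and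
      (hN2.eventually (eventually_gt_nhds hposN2))).and
      ((hDq.eventually (eventually_ne_nhds hD)).and ?_))
    exact Filter.eventually_of_mem (Ioo_mem_nhdsGT_of_mem ⟨le_refl 0, by linarith⟩)
      (fun r hr => hr)
  obtain ⟨r, ⟨hP1, hP2⟩, hDqne, hr0, hrπ⟩ := hev.exists
  have hm : 0 < mass r := mass_pos hr0 hrπ.le
  set q1 := Q θ₁ r
  set q2 := Q θ₂ r
  set q3 := Q θ₃ r
  set xx := x r
  set b1 := ddet xx q2 / ddet q1 q2 with hb1
  set b2 := ddet q1 xx / ddet q1 q2 with hb2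
  have hb1pos : 0 < b1 := div_pos_iff.mpr (mul_pos_iff.mp hP1)
  have hb2pos : 0 < b2 := div_pos_iff.mpr (mul_pos_iff.mp hP2)
  have hcr : b1 • q1 + b2 • q2 = xx := cramer hDqne
  set m := mass r
  refine ⟨fun θ => r + (b1/m) * bmp r θ₁ θ + (b2/m) * bmp r θ₂ θ + (l3/m) * bmp r θ₃ θ,
    ?_, ?_, ?_, ?_⟩
  · exact ((continuous_const.add (continuous_const.mul (bmp_cont r θ₁))).add
      (continuous_const.mul (bmp_cont r θ₂))).add (continuous_const.mul (bmp_cont r θ₃))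
  · intro θ
    have h1 : 0 ≤ (b1/m) * bmp r θ₁ θ :=
      mul_nonneg (div_nonneg hb1pos.le hm.le) (bmp_nonneg _ _ _)
    have h2 : 0 ≤ (b2/m) * bmp r θ₂ θ :=
      mul_nonneg (div_nonneg hb2pos.le hm.le) (bmp_nonneg _ _ _)
    have h3 : 0 ≤ (l3/m) * bmp r θ₃ θ :=
      mul_nonneg (div_nonneg hl3.le hm.le) (bmp_nonneg _ _ _)
    linarith
  · intro θ
    simp only
    rw [bmp_per r θ₁ θ, bmp_per r θ₂ θ, bmp_per r θ₃ θ]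
  · have hsplit : ∀ θ : ℝ,
        ((r + (b1/m) * bmp r θ₁ θ + (b2/m) * bmp r θ₂ θ + (l3/m) * bmp r θ₃ θ : ℝ) : ℂ) * e θ
        = r • e θ + (b1/m) • (bmp r θ₁ θ • e θ) + (b2/m) • (bmp r θ₂ θ • e θ)
          + (l3/m) • (bmp r θ₃ θ • e θ) := by
      intro θ
      simp only [Complex.real_smul, smul_smul]
      push_cast
      ring
    beta_reduce
    simp only [hsplit]
    have int1 : IntervalIntegrable (fun θ => r • e θ) volume 0 (2*π) :=
      (he.const_smul r).intervalIntegrable _ _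
    have int2 : IntervalIntegrable (fun θ => (b1/m) • (bmp r θ₁ θ • e θ)) volume 0 (2*π) :=
      (((bmp_cont r θ₁).smul he).const_smul (b1/m)).intervalIntegrable _ _
    have int3 : IntervalIntegrable (fun θ => (b2/m) • (bmp r θ₂ θ • e θ)) volume 0 (2*π) :=
      (((bmp_cont r θ₂).smul he).const_smul (b2/m)).intervalIntegrable _ _
    have int4 : IntervalIntegrable (fun θ => (l3/m) • (bmp r θ₃ θ • e θ)) volume 0 (2*π) :=
      (((bmp_cont r θ₃).smul he).const_smul (l3/m)).intervalIntegrable _ _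
    rw [intervalIntegral.integral_add ((int1.add int2).add int3) int4,
      intervalIntegral.integral_add (int1.add int2) int3,
      intervalIntegral.integral_add int1 int2,
      intervalIntegral.integral_smul, intervalIntegral.integral_smul,
      intervalIntegral.integral_smul, intervalIntegral.integral_smul]
    have hQm : ∀ c : ℝ, (∫ θ in (0:ℝ)..(2*π), bmp r c θ • e θ) = m • Q c r := by
      intro c
      rw [hQ]
      simp only [smul_smul, mul_inv_cancel₀ hm.ne', one_smul]
      rw [show m * (mass r)⁻¹ = 1 from mul_inv_cancel₀ hm.ne', one_smul]
    rw [hQm θ₁, hQm θ₂, hQm θ₃]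
    have hsm : ∀ b : ℝ, (b/m) • (m • (0:ℂ)) = 0 := by intro b; simp
    have hb1q : (b1/m) • (m • q1) = b1 • q1 := by
      rw [smul_smul, div_mul_cancel₀ _ hm.ne']
    have hb2q : (b2/m) • (m • q2) = b2 • q2 := by
      rw [smul_smul, div_mul_cancel₀ _ hm.ne']
    have hl3q : (l3/m) • (m • q3) = l3 • q3 := by
      rw [smul_smul, div_mul_cancel₀ _ hm.ne']
    rw [hb1q, hb2q, hl3q]
    have : r • I + b1 • q1 + b2 • q2 + l3 • q3 = r • I + (b1 • q1 + b2 • q2) + l3 • q3 := by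
      abel
    rw [this, hcr]
    have hxx : xx = -(l3 • q3) - r • I := rfl
    rw [hxx]
    abel
end

section
/- Let e : S¹ → S¹ ⊂ ℂ be a continuous map whose image is not contained in any closed arc of length π (i.e. for every r ∈ ℝ there exists θ with e(θ) ∉ exp(i·[r−π/2, r+π/2])). Then there exist θ₁, θ₂, θ₃ ∈ S¹ such that 0 lies in the interior of the convex hull of {e(θ₁), e(θ₂), e(θ₃)} in ℝ². -/
open Real

lemma triangle_interior (a t : ℝ) (h1 : π / 2 < t) (h2 : t < π) :
    (0 : ℂ) ∈ interior (convexHull ℝ {Complex.exp (Complex.I * (a : ℂ)),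
      Complex.exp (Complex.I * ((a + t : ℝ) : ℂ)),
      Complex.exp (Complex.I * ((a + 2 * t : ℝ) : ℂ))}) := by
  have hC : Real.cos t < 0 := Real.cos_neg_of_pi_div_two_lt_of_lt h1 (by linarith)
  have hS : 0 < Real.sin t := Real.sin_pos_of_pos_of_lt_pi (by linarith [pi_pos]) h2
  set u : ℂ := Complex.exp (Complex.I * (a : ℂ)) with hu
  set w : ℂ := Complex.exp (Complex.I * (t : ℂ)) with hwdef
  have hw : w = (Real.cos t : ℂ) + (Real.sin t : ℂ) * Complex.I := by
    rw [hwdef, mul_comm, Complex.exp_mul_I]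
    push_cast
    simp
  have hsq : (Real.cos t : ℂ) ^ 2 + (Real.sin t : ℂ) ^ 2 = 1 := by
    exact_mod_cast congrArg (Complex.ofReal) (Real.cos_sq_add_sin_sq t)
  have hkey : w ^ 2 + 1 = 2 * (Real.cos t : ℂ) * w := by
    rw [hw]
    linear_combination (Real.sin t : ℂ) ^ 2 * Complex.I_sq - hsq
  have hv1 : Complex.exp (Complex.I * ((a + t : ℝ) : ℂ)) = u * w := by
    rw [hu, hwdef, ← Complex.exp_add]
    push_cast
    ring_nf
  have hv2 : Complex.exp (Complex.I * ((a + 2 * t : ℝ) : ℂ)) = u * w ^ 2 := by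
    have h : Complex.I * ((a + 2 * t : ℝ) : ℂ)
        = Complex.I * (a : ℂ) + (Complex.I * (t : ℂ) + Complex.I * (t : ℂ)) := by
      push_cast; ring
    rw [h, Complex.exp_add, Complex.exp_add, ← hu, ← hwdef, sq]
  set v : Fin 3 → ℂ := ![u, u * w, u * w ^ 2] with hv
  have hwne1 : w ≠ 1 := by
    rw [hw]
    intro h
    have him := congrArg Complex.im h
    simp only [Complex.add_im, Complex.ofReal_im, Complex.mul_im, Complex.ofReal_re,
      Complex.I_im, Complex.I_re, Complex.one_im, mul_zero, mul_one, zero_add, add_zero] at him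
    linarith
  have hune : u ≠ 0 := Complex.exp_ne_zero _
  -- affine independence
  have hind : AffineIndependent ℝ v := by
    rw [affineIndependent_iff_not_collinear]
    intro hcol
    have h0 : v 0 ∈ Set.range v := ⟨0, rfl⟩
    obtain ⟨d, hd⟩ := (collinear_iff_of_mem h0).mp hcol
    obtain ⟨r2, hr2⟩ := hd (v 1) ⟨1, rfl⟩
    obtain ⟨r3, hr3⟩ := hd (v 2) ⟨2, rfl⟩
    simp only [hv, Matrix.cons_val_one, Matrix.head_cons, Matrix.cons_val_zero,
      Matrix.cons_val_two, Matrix.tail_cons, vadd_eq_add] at hr2 hr3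
    have e2 : u * w - u = r2 • d := by rw [hr2]; ring_nf
    have e3 : u * w ^ 2 - u = r3 • d := by rw [hr3]; ring_nf
    have hcross : r2 • (u * w ^ 2 - u) = r3 • (u * w - u) := by
      rw [e2, e3, smul_smul, smul_smul, mul_comm]
    rw [Complex.real_smul, Complex.real_smul] at hcross
    have hcross' : (r2 : ℂ) * (w ^ 2 - 1) = (r3 : ℂ) * (w - 1) := by
      apply mul_left_cancel₀ hune
      linear_combination hcross
    rw [hw] at hcross'
    have hre := congrArg Complex.re hcross'
    have him := congrArg Complex.im hcross'
    simp only [pow_two, Complex.mul_re, Complex.mul_im, Complex.add_re, Complex.add_im,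
      Complex.sub_re, Complex.sub_im, Complex.ofReal_re, Complex.ofReal_im,
      Complex.I_re, Complex.I_im, Complex.one_re, Complex.one_im,
      mul_zero, mul_one, zero_mul, zero_add, add_zero, sub_zero, zero_sub] at hre him
    have hC1 : Real.cos t ^ 2 + Real.sin t ^ 2 = 1 := Real.cos_sq_add_sin_sq t
    have hkeyr : Real.sin t * (r2 * (2 - 2 * Real.cos t)) = 0 := by
      linear_combination (Real.cos t - 1) * him - Real.sin t * hre - Real.sin t * r2 * hC1
    have hr20 : r2 = 0 := by
      rcases mul_eq_zero.mp hkeyr with h | h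
      · linarith
      · rcases mul_eq_zero.mp h with h' | h'
        · exact h'
        · linarith
    rw [hr20, zero_smul] at e2
    have : u * (w - 1) = 0 := by linear_combination e2
    rcases mul_eq_zero.mp this with h | h
    · exact hune h
    · exact hwne1 (sub_eq_zero.mp h)
  have htot : affineSpan ℝ (Set.range v) = ⊤ := by
    rw [hind.affineSpan_eq_top_iff_card_eq_finrank_add_one]
    simp [Complex.finrank_real_complex]
  set b : AffineBasis (Fin 3) ℝ ℂ := ⟨v, hind, htot⟩ with hb
  set dd : ℝ := (2 - 2 * Real.cos t)⁻¹ with hdd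
  have hddpos : 0 < dd := by rw [hdd]; apply inv_pos.mpr; linarith
  set c : Fin 3 → ℝ := ![dd, -2 * Real.cos t * dd, dd] with hc
  have h2ne : (2 : ℝ) - Real.cos t * 2 ≠ 0 := by nlinarith
  have hsum : ∑ i, c i = 1 := by
    rw [hc]
    simp [Fin.sum_univ_three, hdd]
    field_simp
    have h : (1 : ℝ) + -(2 * Real.cos t) + 1 = 2 - 2 * Real.cos t := by ring
    rw [div_eq_iff (by linarith)]; ring
  have hcomb : Finset.univ.affineCombination ℝ v c = (0 : ℂ) := by
    rw [Finset.univ.affineCombination_eq_linear_combination v c hsum]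
    simp only [Fin.sum_univ_three, hc, hv, Matrix.cons_val_zero, Matrix.cons_val_one,
      Matrix.head_cons, Matrix.cons_val_two, Matrix.tail_cons, Complex.real_smul]
    push_cast [← Complex.ofReal_cos]
    linear_combination ((dd : ℂ) * u) * hkey
  have hcoord : ∀ i, b.coord i (0 : ℂ) = c i := by
    intro i
    have h := b.coord_apply_combination_of_mem (Finset.mem_univ i) hsum
    rw [show ⇑b = v from rfl, hcomb] at h
    exact h
  have hrange : Set.range v = {u, Complex.exp (Complex.I * ((a + t : ℝ) : ℂ)),
      Complex.exp (Complex.I * ((a + 2 * t : ℝ) : ℂ))} := by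
    rw [hv1, hv2, hv, Matrix.range_cons, Matrix.range_cons, Matrix.range_cons_empty,
      Set.singleton_union, Set.singleton_union]
  rw [← hrange, show Set.range v = Set.range ⇑b from rfl, AffineBasis.interior_convexHull]
  intro i
  rw [hcoord]
  rw [hc]
  fin_cases i <;> simp <;> nlinarith [hddpos, hC, hS]

/-- If the image of a continuous map `e : S¹ → S¹ ⊂ ℂ` (modelled as a continuous
`2π`-periodic unit-circle-valued map) is not contained in any closed arc of length `π`,
then there are three points of the image whose convex hull contains `0` in its interior. -/

theorem stmt7 (e : ℝ → ℂ) (he : Continuous e)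
    (hper : ∀ θ : ℝ, e (θ + 2 * π) = e θ)
    (hnorm : ∀ θ : ℝ, ‖e θ‖ = 1)
    (harc : ∀ r : ℝ, ∃ θ : ℝ, ∀ s ∈ Set.Icc (r - π / 2) (r + π / 2),
      e θ ≠ Complex.exp (Complex.I * (s : ℂ))) :
    ∃ θ₁ θ₂ θ₃ : ℝ, (0 : ℂ) ∈ interior (convexHull ℝ {e θ₁, e θ₂, e θ₃}) := by
  have hpi := pi_pos
  by_cases hsurj : ∀ p : ℂ, ‖p‖ = 1 → ∃ θ, e θ = p
  · obtain ⟨θ₁, h1⟩ := hsurj (Complex.exp (Complex.I * ((0 : ℝ) : ℂ)))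
      (by rw [mul_comm]; exact Complex.norm_exp_ofReal_mul_I 0)
    obtain ⟨θ₂, h2⟩ := hsurj (Complex.exp (Complex.I * ((0 + 2 * π / 3 : ℝ) : ℂ)))
      (by rw [mul_comm]; exact Complex.norm_exp_ofReal_mul_I _)
    obtain ⟨θ₃, h3⟩ := hsurj (Complex.exp (Complex.I * ((0 + 2 * (2 * π / 3) : ℝ) : ℂ)))
      (by rw [mul_comm]; exact Complex.norm_exp_ofReal_mul_I _)
    refine ⟨θ₁, θ₂, θ₃, ?_⟩
    rw [h1, h2, h3]
    exact triangle_interior 0 (2 * π / 3) (by linarith) (by linarith)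
  · push_neg at hsurj
    obtain ⟨p, hp1, hpnot⟩ := hsurj
    -- construct a continuous angle function ψ with e θ = exp (I ψ θ)
    obtain ⟨ψ, hψcont, heψ⟩ : ∃ ψ : ℝ → ℝ, Continuous ψ ∧
        ∀ θ, e θ = Complex.exp (Complex.I * ((ψ θ : ℝ) : ℂ)) := by
      set g : ℝ → ℂ := fun θ => -(e θ * (starRingEnd ℂ) p) with hg
      have hpc : p * (starRingEnd ℂ) p = 1 := by
        rw [Complex.mul_conj, Complex.normSq_eq_norm_sq, hp1]
        norm_num
      have hgabs : ∀ θ, ‖g θ‖ = 1 := by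
        intro θ
        simp [hg, hnorm θ, hp1]
      have hslit : ∀ θ, g θ ∈ Complex.slitPlane := by
        intro θ
        rw [Complex.mem_slitPlane_iff]
        by_contra hcon
        push_neg at hcon
        obtain ⟨hre, him⟩ := hcon
        have hreal : g θ = ((g θ).re : ℂ) := Complex.ext rfl (by simp [him])
        have habs : |(g θ).re| = 1 := by
          have := hgabs θ
          rw [hreal] at this
          simpa using this
        have hre1 : (g θ).re = -1 := by
          rcases (abs_eq (by norm_num : (0:ℝ) ≤ 1)).mp habs with h | h
          · linarith
          · exact h
        have hgm1 : g θ = -1 := by rw [hreal, hre1]; norm_num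
        have heθ : e θ = p := by
          have h2 : e θ * (starRingEnd ℂ) p = 1 := by
            have h3 := hgm1
            rw [hg] at h3
            simp only [neg_eq_iff_eq_neg] at h3
            rw [neg_neg] at h3
            exact h3
          calc e θ = e θ * ((starRingEnd ℂ) p * p) := by
                rw [mul_comm ((starRingEnd ℂ) p) p, hpc, mul_one]
            _ = (e θ * (starRingEnd ℂ) p) * p := by ring
            _ = p := by rw [h2, one_mul]
        exact hpnot θ heθ
      have hgcont : Continuous g := (he.mul continuous_const).neg
      have hexp_p : Complex.exp (↑(Complex.arg p) * Complex.I) = p := by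
        have := Complex.norm_mul_exp_arg_mul_I p
        rw [hp1] at this
        simpa using this
      have hexp_g : ∀ θ, Complex.exp (↑(Complex.arg (g θ)) * Complex.I) = g θ := by
        intro θ
        have := Complex.norm_mul_exp_arg_mul_I (g θ)
        rw [hgabs θ] at this
        simpa using this
      refine ⟨fun θ => Complex.arg p + π + Complex.arg (g θ), ?_, ?_⟩
      · apply continuous_const.add
        rw [continuous_iff_continuousAt]
        exact fun θ => (Complex.continuousAt_arg (hslit θ)).comp hgcont.continuousAt
      · intro θ
        have hsplit : Complex.I * ((Complex.arg p + π + Complex.arg (g θ) : ℝ) : ℂ) =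
            ↑(Complex.arg p) * Complex.I +
            (↑π * Complex.I + ↑(Complex.arg (g θ)) * Complex.I) := by
          push_cast
          ring
        rw [hsplit, Complex.exp_add, Complex.exp_add, hexp_p, Complex.exp_pi_mul_I, hexp_g]
        show e θ = p * (-1 * -(e θ * (starRingEnd ℂ) p))
        linear_combination -(e θ) * hpc
    -- extrema of ψ on [0, 2π]
    have hne : (Set.Icc (0:ℝ) (2*π)).Nonempty := Set.nonempty_Icc.mpr (by linarith)
    obtain ⟨θm, hθmmem, hmin⟩ := isCompact_Icc.exists_isMinOn hne hψcont.continuousOn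
    obtain ⟨θM, hθMmem, hmax⟩ := isCompact_Icc.exists_isMaxOn hne hψcont.continuousOn
    have hmin' : ∀ x ∈ Set.Icc (0:ℝ) (2*π), ψ θm ≤ ψ x := fun x hx => hmin hx
    have hmax' : ∀ x ∈ Set.Icc (0:ℝ) (2*π), ψ x ≤ ψ θM := fun x hx => hmax hx
    have hmM : ψ θm ≤ ψ θM := hmin' θM hθMmem
    have hgap : π < ψ θM - ψ θm := by
      by_contra hle
      push_neg at hle
      obtain ⟨θ₀, hθ₀⟩ := harc ((ψ θm + ψ θM) / 2)
      have hperiodic : Function.Periodic e (2 * π) := hper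
      obtain ⟨θ', hθ'mem, hθ'eq⟩ := hperiodic.exists_mem_Ico₀ (by linarith) θ₀
      have hmem' : θ' ∈ Set.Icc (0:ℝ) (2*π) := Set.Ico_subset_Icc_self hθ'mem
      refine hθ₀ (ψ θ') ⟨?_, ?_⟩ ?_
      · have := hmin' θ' hmem'; linarith
      · have := hmax' θ' hmem'; linarith
      · rw [hθ'eq, heψ θ']
    obtain ⟨t, hπ2, htπ, ht2⟩ : ∃ t : ℝ, π / 2 < t ∧ t < π ∧ 2 * t ≤ ψ θM - ψ θm := by
      refine ⟨min ((ψ θM - ψ θm) / 2) (2 * π / 3), lt_min (by linarith) (by linarith),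
        lt_of_le_of_lt (min_le_right _ _) (by linarith), ?_⟩
      have := min_le_left ((ψ θM - ψ θm) / 2) (2 * π / 3)
      linarith
    have hsub : Set.uIcc (ψ θm) (ψ θM) ⊆ ψ '' Set.uIcc θm θM :=
      intermediate_value_uIcc hψcont.continuousOn
    obtain ⟨θ₂, _, hψ2⟩ := hsub (show ψ θm + t ∈ Set.uIcc (ψ θm) (ψ θM) by
      rw [Set.uIcc_of_le hmM]
      exact ⟨by linarith, by linarith⟩)
    obtain ⟨θ₃, _, hψ3⟩ := hsub (show ψ θm + 2 * t ∈ Set.uIcc (ψ θm) (ψ θM) by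
      rw [Set.uIcc_of_le hmM]
      exact ⟨by linarith, by linarith⟩)
    refine ⟨θm, θ₂, θ₃, ?_⟩
    rw [heψ θm, heψ θ₂, heψ θ₃, hψ2, hψ3]
    exact triangle_interior (ψ θm) t hπ2 htπ
end
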